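/- Let (μ_t)_{t≥0} be a family of integrable probability measures on ℝ, each with negative mean m_t. Then the family is non-decreasing in the WDS order (i.e. the functions Ψ^{wds}_{μ_t} are pointwise non-decreasing in t) if and only if the function K(t,x) = ∫_{[x,∞)} (y−x) dμ_t(dy) − m_t is TP₂ on ℝ₊ × ℝ. -/

import Mathlib

open MeasureTheory Set Filter

noncomputable def meanM (μ : Measure ℝ) : ℝ := ∫ y, y ∂μ

noncomputable def rSupE (μ : Measure ℝ) : EReal :=
  sInf ((fun z : ℝ => (z : EReal)) '' {z : ℝ | μ (Ici z) = 0})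

noncomputable def psiWds (μ : Measure ℝ) (x : ℝ) : EReal :=
  if (x : EReal) < rSupE μ then
    ((((∫ y in Ici x, y ∂μ) - meanM μ) / (μ (Ici x)).toReal : ℝ) : EReal)
  else ⊤

noncomputable def Kfun (μ : Measure ℝ) (x : ℝ) : ℝ :=
  (∫ y in Ici x, (y - x) ∂μ) - meanM μ

/-!
Write `G(x) = μ[x, ∞)`. Since `Ψ(x) = K(x) / G(x) + x` below the right endpoint, comparing
`Ψ_s ≤ Ψ_t` at `x` is the cross inequality `G_t(x) K_s(x) ≤ G_s(x) K_t(x)`, while TP₂ says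
that `K_s / K_t` is non-increasing. The function `K` has left derivative `-μ[x, ∞)` and right
derivative `-μ(x, ∞)`, so `K_s / K_t` is non-increasing iff both of its one-sided derivatives are
`≤ 0`, i.e. iff the cross inequality holds for the closed tails and for the open tails. The WDS
order gives it for the closed tails away from `r_t`, hence for the open tails by right limits;
conversely the open-tail inequality forces `r_t ≤ r_s`, so `Ψ_s` is finite wherever `Ψ_t` is.
-/

open Topology OrderDual

lemma antitone_of_hasDerivWithinAt_Ici_nonpos {f f' : ℝ → ℝ} (hf : Continuous f)
    (hf' : ∀ x, HasDerivWithinAt f (f' x) (Ici x) x) (h : ∀ x, f' x ≤ 0) : Antitone f :=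
  fun a _ hab => image_le_of_deriv_right_le_deriv_boundary (B := fun _ => f a)
    hf.continuousOn (fun x _ => hf' x) le_rfl continuousOn_const
    (fun x _ => hasDerivWithinAt_const x _ _) (fun x _ => h x) ⟨hab, le_rfl⟩

lemma HasDerivWithinAt.mul_sub_mul_nonpos_of_antitoneOn_div {f g : ℝ → ℝ} {f' g' x : ℝ}
    {s : Set ℝ} (hf : HasDerivWithinAt f f' s x) (hg : HasDerivWithinAt g g' s x)
    (hgx : g x ≠ 0) (hs : AccPt x (𝓟 s)) (hfg : AntitoneOn (fun y => f y / g y) s) :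
    f' * g x - f x * g' ≤ 0 := by
  have h := (hf.div hg hgx).nonpos_of_antitoneOn hs hfg
  rwa [div_le_iff₀ (by positivity), zero_mul] at h

section Tails

variable {ν : Measure ℝ} [IsFiniteMeasure ν]

lemma tendsto_measureReal_Ici_nhdsGT (x : ℝ) :
    Tendsto (fun z => ν.real (Ici z)) (𝓝[>] x) (𝓝 (ν.real (Ioi x))) := by
  have hinter : ⋂ r > x, Iio r = Iic x := by
    ext y
    simp only [mem_iInter, mem_Iio, mem_Iic]
    exact ⟨fun h => le_of_forall_gt_imp_ge_of_dense fun r hr => (h r hr).le,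
      fun h r hr => h.trans_lt hr⟩
  have h := tendsto_measure_biInter_gt (μ := ν) (s := Iio) (a := x)
    (fun _ _ => measurableSet_Iio.nullMeasurableSet) (fun _ _ _ hij => Iio_subset_Iio hij)
    ⟨x + 1, by linarith, measure_ne_top _ _⟩
  rw [hinter] at h
  have hlim : ν.real (Ioi x) = ν.real univ - ν.real (Iic x) := by
    rw [← measureReal_compl measurableSet_Iic, compl_Iic]
  rw [hlim]
  simp only [← compl_Iio, measureReal_compl measurableSet_Iio]
  exact ((ENNReal.tendsto_toReal (measure_ne_top _ _)).comp h).const_sub _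

lemma tendsto_measureReal_Ici_nhdsLT (x : ℝ) :
    Tendsto (fun z => ν.real (Ici z)) (𝓝[<] x) (𝓝 (ν.real (Ici x))) := by
  have hinter : ⋂ r < x, Ici r = Ici x := by
    ext y
    simp only [mem_iInter, mem_Ici]
    exact ⟨fun h => le_of_forall_lt_imp_le_of_dense fun r hr => h r hr,
      fun h r hr => hr.le.trans h⟩
  -- In `ℝᵒᵈ` the left neighbourhoods of `x` become right ones.
  have h := tendsto_measure_biInter_gt (μ := ν) (ι := ℝᵒᵈ) (s := fun r => Ici (ofDual r))
    (a := toDual x)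
    (fun _ _ => measurableSet_Ici.nullMeasurableSet) (fun _ _ _ hij => Ici_subset_Ici.2 hij)
    ⟨toDual (x - 1), toDual_lt_toDual.2 (by linarith), measure_ne_top _ _⟩
  have h' : Tendsto (fun z => ν (Ici z)) (𝓝[<] x) (𝓝 (ν (Ici x))) := by
    rw [← hinter]
    exact h
  exact (ENNReal.tendsto_toReal (measure_ne_top _ _)).comp h'

end Tails

lemma rSupE_le_of_measure_Ici_eq_zero {ν : Measure ℝ} {x : ℝ} (h : ν (Ici x) = 0) :
    rSupE ν ≤ x :=
  sInf_le ⟨x, h, rfl⟩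

lemma measure_Ici_eq_zero_of_rSupE_lt {ν : Measure ℝ} {x : ℝ} (h : rSupE ν < x) :
    ν (Ici x) = 0 := by
  obtain ⟨_, ⟨z, hz, rfl⟩, hzx⟩ := sInf_lt_iff.1 h
  exact measure_mono_null (Ici_subset_Ici.2 (EReal.coe_lt_coe_iff.1 hzx).le) hz

lemma lt_rSupE_iff {ν : Measure ℝ} {x : ℝ} : (x : EReal) < rSupE ν ↔ ν (Ioi x) ≠ 0 := by
  constructor
  · intro h hx
    obtain ⟨w, hxw, hwr⟩ := EReal.lt_iff_exists_real_btwn.1 h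
    exact hwr.not_ge (rSupE_le_of_measure_Ici_eq_zero
      (measure_mono_null (Ici_subset_Ioi.2 (EReal.coe_lt_coe_iff.1 hxw)) hx))
  · intro hx
    by_contra! h
    have hcover : Ioi x ⊆ ⋃ n : ℕ, Ici (x + 1 / (n + 1)) := fun y (hy : x < y) => by
      obtain ⟨n, hn⟩ := exists_nat_one_div_lt (sub_pos.2 hy)
      exact mem_iUnion.2 ⟨n, by rw [mem_Ici]; linarith⟩
    refine hx (measure_mono_null hcover (measure_iUnion_null fun n => ?_))
    exact measure_Ici_eq_zero_of_rSupE_lt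
      (h.trans_lt (EReal.coe_lt_coe_iff.2 (lt_add_of_pos_right x Nat.one_div_pos_of_nat)))

lemma measureReal_Ici_pos_of_lt_rSupE {ν : Measure ℝ} [IsFiniteMeasure ν] {x : ℝ}
    (h : (x : EReal) < rSupE ν) : 0 < ν.real (Ici x) :=
  ENNReal.toReal_pos (fun h0 => (rSupE_le_of_measure_Ici_eq_zero h0).not_gt h)
    (measure_ne_top _ _)

section Kfun

variable {ν : Measure ℝ}

lemma neg_meanM_le_Kfun (u : ℝ) : -meanM ν ≤ Kfun ν u := by
  have : 0 ≤ ∫ y in Ici u, (y - u) ∂ν :=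
    setIntegral_nonneg measurableSet_Ici fun y hy => sub_nonneg.2 hy
  simp only [Kfun]
  linarith

lemma Kfun_pos (hm : meanM ν < 0) (u : ℝ) : 0 < Kfun ν u := by
  linarith [neg_meanM_le_Kfun (ν := ν) u]

variable [IsFiniteMeasure ν]

lemma integrable_indicator_Ici_sub (hi : Integrable (fun y : ℝ => y) ν) (u : ℝ) :
    Integrable ((Ici u).indicator (· - u)) ν :=
  (hi.sub (integrable_const u)).indicator measurableSet_Ici

lemma Kfun_sub_Kfun_eq_integral (hi : Integrable (fun y : ℝ => y) ν) (u z : ℝ) :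
    Kfun ν u - Kfun ν z =
      ∫ y, ((Ici u).indicator (· - u) y - (Ici z).indicator (· - z) y) ∂ν := by
  rw [integral_sub (integrable_indicator_Ici_sub hi u) (integrable_indicator_Ici_sub hi z),
    integral_indicator measurableSet_Ici, integral_indicator measurableSet_Ici]
  simp only [Kfun]
  ring

lemma mul_measureReal_Ici_le_Kfun_sub (hi : Integrable (fun y : ℝ => y) ν) {u z : ℝ}
    (h : u ≤ z) : (z - u) * ν.real (Ici z) ≤ Kfun ν u - Kfun ν z := by
  rw [Kfun_sub_Kfun_eq_integral hi, mul_comm, ← smul_eq_mul,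
    ← integral_indicator_const _ measurableSet_Ici]
  refine integral_mono ((integrable_const _).indicator measurableSet_Ici)
    ((integrable_indicator_Ici_sub hi u).sub (integrable_indicator_Ici_sub hi z)) fun y => ?_
  simp only [indicator_apply, mem_Ici]
  split_ifs <;> linarith

lemma Kfun_sub_le_mul_measureReal_Ioi (hi : Integrable (fun y : ℝ => y) ν) {u z : ℝ}
    (h : u ≤ z) : Kfun ν u - Kfun ν z ≤ (z - u) * ν.real (Ioi u) := by
  rw [Kfun_sub_Kfun_eq_integral hi, mul_comm, ← smul_eq_mul,
    ← integral_indicator_const _ measurableSet_Ioi]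
  refine integral_mono
    ((integrable_indicator_Ici_sub hi u).sub (integrable_indicator_Ici_sub hi z))
    ((integrable_const _).indicator measurableSet_Ioi) fun y => ?_
  simp only [indicator_apply, mem_Ici, mem_Ioi]
  split_ifs <;> linarith

lemma hasDerivWithinAt_Kfun_Ici (hi : Integrable (fun y : ℝ => y) ν) (x : ℝ) :
    HasDerivWithinAt (Kfun ν) (-ν.real (Ioi x)) (Ici x) x := by
  rw [hasDerivWithinAt_iff_tendsto_slope, Ici_sdiff_left]
  refine tendsto_of_tendsto_of_tendsto_of_le_of_le' tendsto_const_nhds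
    (tendsto_measureReal_Ici_nhdsGT x).neg ?_ ?_ <;>
    filter_upwards [self_mem_nhdsWithin] with z (hz : x < z) <;>
    rw [slope_def_field]
  · rw [le_div_iff₀ (sub_pos.2 hz)]
    linarith [Kfun_sub_le_mul_measureReal_Ioi hi hz.le]
  · rw [div_le_iff₀ (sub_pos.2 hz)]
    linarith [mul_measureReal_Ici_le_Kfun_sub hi hz.le]

lemma hasDerivWithinAt_Kfun_Iic (hi : Integrable (fun y : ℝ => y) ν) (x : ℝ) :
    HasDerivWithinAt (Kfun ν) (-ν.real (Ici x)) (Iic x) x := by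
  rw [hasDerivWithinAt_iff_tendsto_slope, Iic_sdiff_right]
  refine tendsto_of_tendsto_of_tendsto_of_le_of_le' (tendsto_measureReal_Ici_nhdsLT x).neg
    tendsto_const_nhds ?_ ?_ <;>
    filter_upwards [self_mem_nhdsWithin] with z (hz : z < x) <;>
    rw [slope_def_field]
  · rw [le_div_iff_of_neg (sub_neg.2 hz)]
    have hIoi := mul_le_mul_of_nonneg_left
      (measureReal_mono (μ := ν) (Ioi_subset_Ici_self (a := z))) (sub_nonneg.2 hz.le)
    linarith [Kfun_sub_le_mul_measureReal_Ioi hi hz.le]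
  · rw [div_le_iff_of_neg (sub_neg.2 hz)]
    linarith [mul_measureReal_Ici_le_Kfun_sub hi hz.le]

lemma continuous_Kfun (hi : Integrable (fun y : ℝ => y) ν) : Continuous (Kfun ν) :=
  continuous_iff_continuousAt.2 fun x => continuousAt_iff_continuous_left_right.2
    ⟨(hasDerivWithinAt_Kfun_Iic hi x).continuousWithinAt,
      (hasDerivWithinAt_Kfun_Ici hi x).continuousWithinAt⟩

lemma Kfun_eq_setIntegral_sub (hi : Integrable (fun y : ℝ => y) ν) (x : ℝ) :
    Kfun ν x = ∫ y in Ici x, y ∂ν - x * ν.real (Ici x) - meanM ν := by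
  rw [Kfun, integral_sub hi.restrict (integrable_const x), setIntegral_const, smul_eq_mul,
    mul_comm]

end Kfun

lemma psiWds_of_lt_rSupE {ν : Measure ℝ} [IsFiniteMeasure ν]
    (hi : Integrable (fun y : ℝ => y) ν) {x : ℝ} (h : (x : EReal) < rSupE ν) :
    psiWds ν x = ((Kfun ν x / ν.real (Ici x) + x : ℝ) : EReal) := by
  have hpos := measureReal_Ici_pos_of_lt_rSupE h
  rw [psiWds, if_pos h, Kfun_eq_setIntegral_sub hi, ← measureReal_def]
  congr 1
  field_simp
  ring

section Pair

variable {ν₁ ν₂ : Measure ℝ}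

lemma tp2_iff_antitone_Kfun_div (hm₂ : meanM ν₂ < 0) :
    (∀ x y, x ≤ y → Kfun ν₁ y * Kfun ν₂ x ≤ Kfun ν₁ x * Kfun ν₂ y) ↔
      Antitone fun x => Kfun ν₁ x / Kfun ν₂ x :=
  forall₃_congr fun x y _ => (div_le_div_iff₀ (Kfun_pos hm₂ y) (Kfun_pos hm₂ x)).symm

variable [IsFiniteMeasure ν₁] [IsFiniteMeasure ν₂]

lemma psiWds_le_psiWds_iff (hi₁ : Integrable (fun y : ℝ => y) ν₁)
    (hi₂ : Integrable (fun y : ℝ => y) ν₂) {x : ℝ} (h₁ : (x : EReal) < rSupE ν₁)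
    (h₂ : (x : EReal) < rSupE ν₂) :
    psiWds ν₁ x ≤ psiWds ν₂ x ↔
      ν₂.real (Ici x) * Kfun ν₁ x ≤ ν₁.real (Ici x) * Kfun ν₂ x := by
  rw [psiWds_of_lt_rSupE hi₁ h₁, psiWds_of_lt_rSupE hi₂ h₂, EReal.coe_le_coe_iff,
    add_le_add_iff_right, div_le_div_iff₀ (measureReal_Ici_pos_of_lt_rSupE h₁)
      (measureReal_Ici_pos_of_lt_rSupE h₂), mul_comm, mul_comm (Kfun ν₂ x)]

lemma antitone_Kfun_div_of_measureReal_Ioi (hi₁ : Integrable (fun y : ℝ => y) ν₁)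
    (hi₂ : Integrable (fun y : ℝ => y) ν₂) (hm₂ : meanM ν₂ < 0)
    (h : ∀ u, ν₂.real (Ioi u) * Kfun ν₁ u ≤ ν₁.real (Ioi u) * Kfun ν₂ u) :
    Antitone fun x => Kfun ν₁ x / Kfun ν₂ x :=
  antitone_of_hasDerivWithinAt_Ici_nonpos
    ((continuous_Kfun hi₁).div (continuous_Kfun hi₂) fun x => (Kfun_pos hm₂ x).ne')
    (fun x => (hasDerivWithinAt_Kfun_Ici hi₁ x).div (hasDerivWithinAt_Kfun_Ici hi₂ x)
      (Kfun_pos hm₂ x).ne')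
    fun x => div_nonpos_of_nonpos_of_nonneg (by linarith [h x]) (sq_nonneg _)

lemma measureReal_Ioi_mul_Kfun_le_of_antitone (hi₁ : Integrable (fun y : ℝ => y) ν₁)
    (hi₂ : Integrable (fun y : ℝ => y) ν₂) (hm₂ : meanM ν₂ < 0)
    (h : Antitone fun x => Kfun ν₁ x / Kfun ν₂ x) (x : ℝ) :
    ν₂.real (Ioi x) * Kfun ν₁ x ≤ ν₁.real (Ioi x) * Kfun ν₂ x := by
  have hx : AccPt x (𝓟 (Ici x)) := by
    rw [accPt_principal_iff_nhdsWithin, Ici_sdiff_left]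
    infer_instance
  linarith [(hasDerivWithinAt_Kfun_Ici hi₁ x).mul_sub_mul_nonpos_of_antitoneOn_div
    (hasDerivWithinAt_Kfun_Ici hi₂ x) (Kfun_pos hm₂ x).ne' hx (h.antitoneOn _)]

lemma measureReal_Ici_mul_Kfun_le_of_antitone (hi₁ : Integrable (fun y : ℝ => y) ν₁)
    (hi₂ : Integrable (fun y : ℝ => y) ν₂) (hm₂ : meanM ν₂ < 0)
    (h : Antitone fun x => Kfun ν₁ x / Kfun ν₂ x) (x : ℝ) :
    ν₂.real (Ici x) * Kfun ν₁ x ≤ ν₁.real (Ici x) * Kfun ν₂ x := by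
  have hx : AccPt x (𝓟 (Iic x)) := by
    rw [accPt_principal_iff_nhdsWithin, Iic_sdiff_right]
    infer_instance
  linarith [(hasDerivWithinAt_Kfun_Iic hi₁ x).mul_sub_mul_nonpos_of_antitoneOn_div
    (hasDerivWithinAt_Kfun_Iic hi₂ x) (Kfun_pos hm₂ x).ne' hx (h.antitoneOn _)]

lemma measureReal_Ioi_mul_Kfun_le_of_psiWds_le (hi₁ : Integrable (fun y : ℝ => y) ν₁)
    (hi₂ : Integrable (fun y : ℝ => y) ν₂) (hm₂ : meanM ν₂ < 0)
    (h : ∀ z, psiWds ν₁ z ≤ psiWds ν₂ z) (u : ℝ) :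
    ν₂.real (Ioi u) * Kfun ν₁ u ≤ ν₁.real (Ioi u) * Kfun ν₂ u := by
  have hcross : ∀ z : ℝ, (z : EReal) ≠ rSupE ν₂ →
      ν₂.real (Ici z) * Kfun ν₁ z ≤ ν₁.real (Ici z) * Kfun ν₂ z := by
    intro z hz
    rcases hz.lt_or_gt with h₂ | h₂
    · have h₁ : (z : EReal) < rSupE ν₁ := by
        by_contra h₁
        have hz := h z
        rw [psiWds, if_neg h₁, top_le_iff, psiWds_of_lt_rSupE hi₂ h₂] at hz
        exact EReal.coe_ne_top _ hz
      exact (psiWds_le_psiWds_iff hi₁ hi₂ h₁ h₂).1 (h z)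
    · rw [measureReal_def, measure_Ici_eq_zero_of_rSupE_lt h₂, ENNReal.toReal_zero, zero_mul]
      exact mul_nonneg measureReal_nonneg (Kfun_pos hm₂ z).le
  -- At `z = r₂` the order says nothing (`Ψ₂ = ⊤`) although `ν₂` may have an atom there.
  have hne : ∀ᶠ z : ℝ in 𝓝[>] u, (z : EReal) ≠ rSupE ν₂ := by
    have : ∀ᶠ z in 𝓝[>] u, z ≠ (rSupE ν₂).toReal := by
      rcases eq_or_ne u (rSupE ν₂).toReal with rfl | hu
      · exact eventually_mem_nhdsWithin.mono fun z hz => hz.ne'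
      · exact eventually_ne_nhdsWithin hu
    exact this.mono fun z (hz : z ≠ _) (hzr : (z : EReal) = rSupE ν₂) =>
      hz (by rw [← hzr, EReal.toReal_coe])
  have hK : ∀ {ν : Measure ℝ} [IsFiniteMeasure ν], Integrable (fun y : ℝ => y) ν →
      Tendsto (Kfun ν) (𝓝[>] u) (𝓝 (Kfun ν u)) :=
    fun hi => (continuous_Kfun hi).continuousAt.tendsto.mono_left nhdsWithin_le_nhds
  exact le_of_tendsto_of_tendsto ((tendsto_measureReal_Ici_nhdsGT u).mul (hK hi₁))
    ((tendsto_measureReal_Ici_nhdsGT u).mul (hK hi₂)) (hne.mono fun z hz => hcross z hz)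

theorem psiWds_le_iff_tp2 (hi₁ : Integrable (fun y : ℝ => y) ν₁)
    (hi₂ : Integrable (fun y : ℝ => y) ν₂) (hm₁ : meanM ν₁ < 0) (hm₂ : meanM ν₂ < 0) :
    (∀ x, psiWds ν₁ x ≤ psiWds ν₂ x) ↔
      ∀ x y, x ≤ y → Kfun ν₁ y * Kfun ν₂ x ≤ Kfun ν₁ x * Kfun ν₂ y := by
  rw [tp2_iff_antitone_Kfun_div hm₂]
  refine ⟨fun h => antitone_Kfun_div_of_measureReal_Ioi hi₁ hi₂ hm₂
    (measureReal_Ioi_mul_Kfun_le_of_psiWds_le hi₁ hi₂ hm₂ h), fun h x => ?_⟩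
  by_cases hx₂ : (x : EReal) < rSupE ν₂
  · have hx₁ : (x : EReal) < rSupE ν₁ := by
      rw [lt_rSupE_iff] at hx₂ ⊢
      intro h0
      have hcross := measureReal_Ioi_mul_Kfun_le_of_antitone hi₁ hi₂ hm₂ h x
      rw [measureReal_def ν₁, h0, ENNReal.toReal_zero, zero_mul] at hcross
      exact (mul_pos (ENNReal.toReal_pos hx₂ (measure_ne_top _ _)) (Kfun_pos hm₁ x)).not_ge
        hcross
    exact (psiWds_le_psiWds_iff hi₁ hi₂ hx₁ hx₂).2
      (measureReal_Ici_mul_Kfun_le_of_antitone hi₁ hi₂ hm₂ h x)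
  · rw [show psiWds ν₂ x = ⊤ from if_neg hx₂]
    exact le_top

end Pair

theorem stmt6 (μ : ℝ → Measure ℝ)
    (hprob : ∀ t, 0 ≤ t → IsProbabilityMeasure (μ t))
    (hint : ∀ t, 0 ≤ t → Integrable (fun y : ℝ => y) (μ t))
    (hneg : ∀ t, 0 ≤ t → meanM (μ t) < 0) :
    (∀ s t, 0 ≤ s → s ≤ t → ∀ x : ℝ, psiWds (μ s) x ≤ psiWds (μ t) x) ↔
      (∀ s t, 0 ≤ s → s ≤ t → ∀ x y : ℝ, x ≤ y →
        Kfun (μ s) y * Kfun (μ t) x ≤ Kfun (μ s) x * Kfun (μ t) y) := by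
  refine forall₄_congr fun s t hs hst => ?_
  have ht := hs.trans hst
  have := hprob s hs
  have := hprob t ht
  exact psiWds_le_iff_tp2 (hint s hs) (hint t ht) (hneg s hs) (hneg t ht)
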